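/- arXiv:1007.1666 — 2 statements merged into one kernel-verified Lean document; each statement's English description precedes it below -/
import Mathlib

section
/- The space X[λ, μ, 𝒜, C̄] is scattered: it is right-separated by the lexicographic ordering on λ × κ, i.e., every nonempty subset contains a point isolated in that subset. -/
open Set Ordinal Cardinal Topology

noncomputable section

namespace DSoukupPaper

/-- The set `S^λ_μ` of ordinals below `lam` of cofinality `mu`. -/
def Sset (lam : Ordinal.{0}) (mu : Cardinal.{0}) : Set Ordinal := {α | α < lam ∧ α.cof = mu}

/-- `C` is a club in the ordinal `o`. -/
def IsClubBelow (C : Set Ordinal.{0}) (o : Ordinal.{0}) : Prop :=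
  C ⊆ Set.Iio o ∧ (∀ β < o, ∃ γ ∈ C, β ≤ γ) ∧
    (∀ β < o, Order.IsSuccLimit β → (∀ γ < β, ∃ δ ∈ C, γ < δ ∧ δ < β) → β ∈ C)

/-- `A` is nonstationary in the ordinal `o`. -/
def IsNonstationaryBelow (A : Set Ordinal.{0}) (o : Ordinal.{0}) : Prop :=
  ∃ C : Set Ordinal, IsClubBelow C o ∧ ∀ x ∈ A, x ∉ C

/-- `A` is stationary in the ordinal `o`. -/
def IsStationaryBelow (A : Set Ordinal.{0}) (o : Ordinal.{0}) : Prop :=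
  ∀ C : Set Ordinal, IsClubBelow C o → ∃ x ∈ A, x ∈ C

/-- A `T₁` space is linearly D iff every nontrivial monotone open cover admits a
closed discrete big set (Guo–Junnila characterization, taken as definition). -/
def LinearlyDSpace (Y : Type*) [TopologicalSpace Y] : Prop :=
  ∀ 𝒰 : Set (Set Y), (∀ U ∈ 𝒰, IsOpen U) → ⋃₀ 𝒰 = Set.univ →
    IsChain (· ⊆ ·) 𝒰 → (∀ U ∈ 𝒰, U ≠ Set.univ) →
    ∃ D : Set Y, IsClosed D ∧ DiscreteTopology D ∧ ∀ U ∈ 𝒰, ¬D ⊆ U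

/-- The data of the construction `X[λ,μ,𝒜,C̄]`: cardinals `λ > μ = cf(μ)`,
a MAD family `𝒜 = {M^φ : φ < κ} ⊆ [μ]^μ`, and an `S^λ_μ`-club sequence
`C̄ = ⟨C_α : α ∈ S^λ_μ⟩`, given via increasing enumerations `a α : μ → C_α`. -/
structure Setup where
  lam : Cardinal.{0}
  mu : Cardinal.{0}
  kappa : Cardinal.{0}
  mu_reg : mu.IsRegular
  mu_lt_lam : mu < lam
  /-- the MAD family: `M φ` for `φ < κ` -/
  M : Ordinal.{0} → Set Ordinal.{0}
  M_sub : ∀ φ < kappa.ord, M φ ⊆ Set.Iio mu.ord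
  M_card : ∀ φ < kappa.ord, #(M φ) = Cardinal.lift.{1} mu
  M_ad : ∀ φ < kappa.ord, ∀ ψ < kappa.ord, φ ≠ ψ →
    #(↥(M φ ∩ M ψ)) < Cardinal.lift.{1} mu
  M_mad : ∀ N ⊆ Set.Iio mu.ord, #N = Cardinal.lift.{1} mu →
    ∃ φ < kappa.ord, #(↥(N ∩ M φ)) = Cardinal.lift.{1} mu
  /-- the club sequence: `a α ξ` is the `ξ`-th element of `C_α` -/
  a : Ordinal.{0} → Ordinal.{0} → Ordinal.{0}
  a_mono : ∀ α ∈ Sset lam.ord mu, ∀ ξ < mu.ord, ∀ ζ < ξ, a α ζ < a α ξ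
  a_lt : ∀ α ∈ Sset lam.ord mu, ∀ ξ < mu.ord, a α ξ < α
  a_unbounded : ∀ α ∈ Sset lam.ord mu, ∀ β < α, ∃ ξ < mu.ord, β ≤ a α ξ
  a_closed : ∀ α ∈ Sset lam.ord mu, ∀ ξ < mu.ord, Order.IsSuccLimit ξ →
    IsLUB (a α '' Set.Iio ξ) (a α ξ)

namespace Setup

variable (P : Setup)

/-- `C_α` as a set. -/
def C (α : Ordinal) : Set Ordinal := P.a α '' Set.Iio P.mu.ord

open Classical in
/-- the interval `I^ξ_α`. -/
def I (α ξ : Ordinal) : Set Ordinal :=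
  if Order.IsSuccLimit ξ then Set.Icc (P.a α ξ) (P.a α (ξ + 1)) else Set.Ioc (P.a α ξ) (P.a α (ξ + 1))

/-- the underlying set of the space: a subset of `λ × κ`. -/
def Xset : Set (Ordinal × Ordinal) :=
  {p | p.1 < P.lam.ord ∧
    ((p.1 ∈ Sset P.lam.ord P.mu ∧ p.2 < P.kappa.ord) ∨
      (p.1 ∉ Sset P.lam.ord P.mu ∧ p.2 = 0))}

/-- the column `X_α` (as a set of pairs). -/
def col (α : Ordinal) : Set (Ordinal × Ordinal) := {p ∈ P.Xset | p.1 = α}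

/-- basic neighborhood `U((α,φ),η)` for `α ∈ S^λ_μ`. -/
def U1 (α φ η : Ordinal) : Set (Ordinal × Ordinal) :=
  {(α, φ)} ∪ ⋃ γ ∈ (⋃ ξ ∈ {ξ | ξ ∈ P.M φ ∧ η ≤ ξ}, P.I α ξ), P.col γ

/-- basic neighborhood `U(α,β) = ⋃{X_γ : β < γ ≤ α}`. -/
def U3 (α β : Ordinal) : Set (Ordinal × Ordinal) := ⋃ γ ∈ Set.Ioc β α, P.col γ

/-- the collection of basic open sets. -/
def basics : Set (Set (Ordinal × Ordinal)) :=
  {B | (∃ α ∈ Sset P.lam.ord P.mu, ∃ φ < P.kappa.ord, ∃ η < P.mu.ord, B = P.U1 α φ η) ∨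
    (∃ α < P.lam.ord, α.cof < P.mu ∧ B = {(α, 0)}) ∨
    (∃ α < P.lam.ord, P.mu < α.cof ∧ ∃ β < α, B = P.U3 α β)}

/-- the topology of `X[λ,μ,𝒜,C̄]`, generated by the basic open sets. -/
instance instTopo : TopologicalSpace ↥P.Xset :=
  TopologicalSpace.generateFrom {V | ∃ B ∈ P.basics, V = Subtype.val ⁻¹' B}

/-- the column `X_α` viewed inside the space. -/
def colS (α : Ordinal) : Set ↥P.Xset := {x | (x : Ordinal × Ordinal).1 = α}

/-- the projection `π(F) = {α < λ : F ∩ X_α ≠ ∅}`. -/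
def pi (F : Set ↥P.Xset) : Set Ordinal := {α | ∃ x ∈ F, (x : Ordinal × Ordinal).1 = α}

/-- `F` is unbounded iff `π(F)` is unbounded in `λ`. -/
def Unbounded (F : Set ↥P.Xset) : Prop := ∀ β < P.lam.ord, ∃ γ ∈ P.pi F, β < γ

/-- `F` is high enough iff `|{α < λ : |F_α| = |F|}| ≥ μ`. -/
def HighEnough (F : Set ↥P.Xset) : Prop :=
  Cardinal.lift.{1} P.mu ≤ #({α | #(↥(F ∩ P.colS α)) = #F} : Set Ordinal)

end Setup
end DSoukupPaper

/-! Apart from the point itself, the basic neighbourhood `U((α,φ),0)`, `{(α,0)}` or `U(α,0)`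
of a point in column `X_α` lies in earlier columns, so the first coordinate right-separates the
space: a point of a nonempty set with least first coordinate is isolated in it. -/

namespace DSoukupPaper

section RightSeparated

variable {X β : Type*} [TopologicalSpace X] [Preorder β]

def IsRightSeparatedBy (f : X → β) : Prop :=
  ∀ x, ∃ V : Set X, IsOpen V ∧ x ∈ V ∧ ∀ y ∈ V, y ≠ x → f y < f x

theorem IsRightSeparatedBy.exists_isolated [WellFoundedLT β] {f : X → β}
    (hf : IsRightSeparatedBy f) {F : Set X} (hF : F.Nonempty) :
    ∃ x ∈ F, ∃ V : Set X, IsOpen V ∧ V ∩ F = {x} := by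
  obtain ⟨x, hxF, hx_min⟩ := (InvImage.wf f wellFounded_lt).has_min F hF
  obtain ⟨V, hV, hxV, hV_lt⟩ := hf x
  refine ⟨x, hxF, V, hV, Set.eq_singleton_iff_unique_mem.2 ⟨⟨hxV, hxF⟩, ?_⟩⟩
  rintro y ⟨hyV, hyF⟩
  by_contra hyx
  exact hx_min y hyF (hV_lt y hyV hyx)

end RightSeparated

namespace Setup

variable (P : Setup)

theorem isOpen_preimage_of_mem_basics {B : Set (Ordinal × Ordinal)} (hB : B ∈ P.basics) :
    IsOpen (Subtype.val ⁻¹' B : Set P.Xset) :=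
  TopologicalSpace.GenerateOpen.basic _ ⟨B, hB, rfl⟩

variable {P}

theorem snd_lt_of_fst_mem_Sset {p : Ordinal × Ordinal} (hp : p ∈ P.Xset)
    (hS : p.1 ∈ Sset P.lam.ord P.mu) : p.2 < P.kappa.ord :=
  hp.2.resolve_right (fun h => h.1 hS) |>.2

theorem snd_eq_zero_of_fst_notMem_Sset {p : Ordinal × Ordinal} (hp : p ∈ P.Xset)
    (hS : p.1 ∉ Sset P.lam.ord P.mu) : p.2 = 0 :=
  hp.2.resolve_left (fun h => hS h.1) |>.2

theorem I_subset_Iic (α ξ : Ordinal) : P.I α ξ ⊆ Set.Iic (P.a α (ξ + 1)) := by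
  unfold I
  split_ifs
  exacts [fun _ h => h.2, fun _ h => h.2]

theorem fst_lt_of_mem_U1 {α φ η : Ordinal} (hα : α ∈ Sset P.lam.ord P.mu)
    (hφ : φ < P.kappa.ord) {p : Ordinal × Ordinal} (hp : p ∈ P.U1 α φ η)
    (hpα : p ≠ (α, φ)) : p.1 < α := by
  have hμ : Order.IsSuccLimit P.mu.ord := Cardinal.isSuccLimit_ord P.mu_reg.aleph0_le
  simp only [U1, Set.mem_union, Set.mem_singleton_iff, hpα, false_or, Set.mem_iUnion,
    exists_prop, Set.mem_ofPred_eq] at hp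
  obtain ⟨γ, ⟨ξ, ⟨hξM, -⟩, hγI⟩, -, rfl⟩ := hp
  have hξ : ξ < P.mu.ord := P.M_sub φ hφ hξM
  calc p.1 ≤ P.a α (ξ + 1) := P.I_subset_Iic α ξ hγI
    _ < α := P.a_lt α hα (ξ + 1) (hμ.add_one_lt hξ)

theorem fst_lt_of_mem_U3 {α β : Ordinal} (hα : α ∉ Sset P.lam.ord P.mu)
    {p : Ordinal × Ordinal} (hp : p ∈ P.U3 α β) (hpα : p ≠ (α, 0)) : p.1 < α := by
  simp only [U3, Set.mem_iUnion, exists_prop] at hp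
  obtain ⟨γ, ⟨-, hγα⟩, hpX, rfl⟩ := hp
  refine hγα.lt_of_ne fun hpα' => hpα (Prod.ext hpα' ?_)
  exact snd_eq_zero_of_fst_notMem_Sset hpX (hpα' ▸ hα)

variable (P)

theorem isRightSeparatedBy_fst :
    IsRightSeparatedBy (fun x : P.Xset => (x : Ordinal × Ordinal).1) := by
  rintro ⟨⟨α, φ⟩, hx⟩
  have hα : α < P.lam.ord := hx.1
  by_cases hS : α ∈ Sset P.lam.ord P.mu
  · have hφ : φ < P.kappa.ord := snd_lt_of_fst_mem_Sset hx hS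
    have hμ : 0 < P.mu.ord := (Cardinal.isSuccLimit_ord P.mu_reg.aleph0_le).bot_lt
    refine ⟨_, P.isOpen_preimage_of_mem_basics (Or.inl ⟨α, hS, φ, hφ, 0, hμ, rfl⟩),
      Or.inl rfl, fun y hy hyx => fst_lt_of_mem_U1 hS hφ hy fun h => hyx (Subtype.ext h)⟩
  obtain rfl : φ = 0 := snd_eq_zero_of_fst_notMem_Sset hx hS
  rcases (show α.cof ≠ P.mu from fun h => hS ⟨hα, h⟩).lt_or_gt with hcof | hcof
  · refine ⟨_, P.isOpen_preimage_of_mem_basics (Or.inr (Or.inl ⟨α, hα, hcof, rfl⟩)), rfl,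
      fun y hy hyx => absurd (Subtype.ext hy : y = ⟨(α, 0), hx⟩) hyx⟩
  · have hα₀ : 0 < α := pos_iff_ne_zero.2 fun h => by simp [h] at hcof
    refine ⟨_,
      P.isOpen_preimage_of_mem_basics (Or.inr (Or.inr ⟨α, hα, hcof, 0, hα₀, rfl⟩)),
      Set.mem_biUnion ⟨hα₀, le_rfl⟩ ⟨hx, rfl⟩,
      fun y hy hyx => fst_lt_of_mem_U3 hS hy fun h => hyx (Subtype.ext h)⟩

end Setup

/-- The space `X[λ,μ,𝒜,C̄]` is scattered: every nonempty subset has a point isolated in it. -/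
theorem stmt9 (P : Setup) (F : Set ↥P.Xset) (hF : F.Nonempty) :
    ∃ x ∈ F, ∃ V : Set ↥P.Xset, IsOpen V ∧ V ∩ F = {x} :=
  (Setup.isRightSeparatedBy_fst P).exists_isolated hF

end DSoukupPaper
end
end

section
/- Let X = X[λ, μ, 𝒜, C̄] and define π(F) = {α < λ : F ∩ X_α ≠ ∅} for F ⊆ X. If F ⊆ X and π(F) accumulates to some α of cofinality η with μ ≤ η < λ, then the derived set F' intersects the column X_α. -/
open Set Ordinal Cardinal Topology

noncomputable section

/-!
If `cf α > μ`, the point `(α, 0)` has the neighbourhood base `U(α, β)`, `β < α`, so the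
accumulation of `π(F)` at `α` is exactly what is needed. If `cf α = μ`, then `α ∈ S^λ_μ` and
the intervals `I^ξ_α`, `ξ < μ`, cover `(a^0_α, α)`, so `N = {ξ < μ : I^ξ_α ∩ π(F) ≠ ∅}` is
unbounded in the regular `μ`, hence of size `μ`. By maximality some `M^φ` meets `N` in `μ`
points, and every `U((α, φ), η)` then meets `F`.

The displayed sets form neighbourhood bases because a column `X_γ` with `cf γ ≥ μ` never lies
on the closed end `a^ξ_{α'}` of an interval `I^ξ_{α'}` at a limit `ξ < μ`: such points have
cofinality `< μ`. So any basic set around a point of `X_γ` contains some `U(γ, β)`.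
-/

open Set Filter

universe u

theorem Ordinal.lift_cof_le_mk_of_forall_exists_le {o : Ordinal.{u}} {S : Set Ordinal.{u}}
    (hS : S ⊆ Iio o) (h : ∀ β < o, ∃ γ ∈ S, β ≤ γ) : Cardinal.lift.{u + 1} o.cof ≤ #S := by
  have hcofinal : IsCofinal (Subtype.val ⁻¹' S : Set (Iio o)) := fun b =>
    let ⟨γ, hγS, hγ⟩ := h b.1 b.2
    ⟨⟨γ, hS hγS⟩, hγS, hγ⟩
  calc Cardinal.lift.{u + 1} o.cof = Order.cof (Iio o) := by rw [Ordinal.cof_Iio, Ordinal.lift_cof]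
    _ ≤ #(Subtype.val ⁻¹' S : Set (Iio o)) := Order.cof_le hcofinal
    _ ≤ #S := Cardinal.mk_preimage_of_injective _ _ Subtype.val_injective

theorem Ordinal.mk_le_lift_card_of_subset_Iio {o : Ordinal.{u}} {S : Set Ordinal.{u}}
    (hS : S ⊆ Iio o) : #S ≤ Cardinal.lift.{u + 1} o.card :=
  (Cardinal.mk_le_mk_of_subset hS).trans_eq (Cardinal.mk_Iio_ordinal o)

theorem Cardinal.IsRegular.mk_eq_iff_forall_exists_le {c : Cardinal.{u}} (hc : c.IsRegular)
    {N : Set Ordinal.{u}} (hN : N ⊆ Iio c.ord) :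
    #N = Cardinal.lift.{u + 1} c ↔ ∀ η < c.ord, ∃ ξ ∈ N, η ≤ ξ := by
  constructor
  · intro hcard η hη
    by_contra! hbdd
    have hle := Ordinal.mk_le_lift_card_of_subset_Iio (S := N) hbdd
    rw [hcard, Cardinal.lift_le] at hle
    exact hle.not_gt (Cardinal.lt_ord.1 hη)
  · intro hcofinal
    refine le_antisymm ?_ ?_
    · simpa using Ordinal.mk_le_lift_card_of_subset_Iio hN
    · simpa [hc.cof_ord] using Ordinal.lift_cof_le_mk_of_forall_exists_le hN hcofinal

theorem TopologicalSpace.hasBasis_nhds_generateFrom {X ι : Type*} {g : Set (Set X)} {x : X}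
    {S : Set ι} {B : ι → Set X} (hS : S.Nonempty) (hdir : DirectedOn (B ⁻¹'o (· ⊇ ·)) S)
    (hBg : ∀ i ∈ S, B i ∈ g ∧ x ∈ B i) (hg : ∀ s ∈ g, x ∈ s → ∃ i ∈ S, B i ⊆ s) :
    (@nhds X (generateFrom g) x).HasBasis (· ∈ S) B := by
  let := generateFrom g
  suffices 𝓝 x = ⨅ i ∈ S, 𝓟 (B i) by
    rw [this]
    exact hasBasis_biInf_principal hdir hS
  rw [nhds_generateFrom]
  refine le_antisymm (le_iInf₂ fun i hi => iInf₂_le (B i) ⟨(hBg i hi).2, (hBg i hi).1⟩) ?_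
  refine le_iInf₂ fun s ⟨hxs, hs⟩ => ?_
  obtain ⟨i, hi, hBs⟩ := hg s hs hxs
  exact iInf₂_le_of_le i hi (principal_mono.2 hBs)

namespace DSoukupPaper.Setup

variable (P : Setup) {α α' β γ ξ η φ : Ordinal}

theorem add_one_lt_mu_ord (hξ : ξ < P.mu.ord) : ξ + 1 < P.mu.ord :=
  (Cardinal.isSuccLimit_ord P.mu_reg.aleph0_le).add_one_lt hξ

section ClubSequence

variable (hα : α ∈ Sset P.lam.ord P.mu)
include hα

theorem a_le_a (hξ : ξ < P.mu.ord) (hηξ : η ≤ ξ) : P.a α η ≤ P.a α ξ := by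
  rcases hηξ.eq_or_lt with rfl | hlt
  · exact le_rfl
  · exact (P.a_mono α hα ξ hξ η hlt).le

theorem a_lt_a_add_one (hξ : ξ < P.mu.ord) : P.a α ξ < P.a α (ξ + 1) :=
  P.a_mono α hα _ (P.add_one_lt_mu_ord hξ) ξ (lt_add_one ξ)

theorem cof_a_lt_mu (hξ : ξ < P.mu.ord) (hlim : Order.IsSuccLimit ξ) :
    (P.a α ξ).cof < P.mu := by
  have hlub := P.a_closed α hα ξ hξ hlim
  have hsub : P.a α '' Iio ξ ⊆ Iio (P.a α ξ) := by
    rintro _ ⟨ζ, hζ, rfl⟩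
    exact P.a_mono α hα ξ hξ ζ hζ
  have hcofinal : ∀ β < P.a α ξ, ∃ γ ∈ P.a α '' Iio ξ, β ≤ γ := fun β hβ =>
    let ⟨γ, hγ, hβγ, _⟩ := hlub.exists_between hβ
    ⟨γ, hγ, hβγ.le⟩
  have hle : Cardinal.lift.{1} (P.a α ξ).cof ≤ Cardinal.lift.{1} ξ.card :=
    (Ordinal.lift_cof_le_mk_of_forall_exists_le hsub hcofinal).trans
      (Cardinal.mk_image_le.trans_eq (Cardinal.mk_Iio_ordinal ξ))
  exact (Cardinal.lift_le.1 hle).trans_lt (Cardinal.lt_ord.1 hξ)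

end ClubSequence

theorem I_subset_Icc : P.I α ξ ⊆ Icc (P.a α ξ) (P.a α (ξ + 1)) := by
  unfold I
  split_ifs
  exacts [subset_rfl, Ioc_subset_Icc_self]

theorem Ioc_subset_I : Ioc (P.a α ξ) (P.a α (ξ + 1)) ⊆ P.I α ξ := by
  unfold I
  split_ifs
  exacts [Ioc_subset_Icc_self, subset_rfl]

theorem lt_of_mem_I (hα : α ∈ Sset P.lam.ord P.mu) (hξ : ξ < P.mu.ord) (hγ : γ ∈ P.I α ξ) :
    γ < α :=
  (P.I_subset_Icc hγ).2.trans_lt (P.a_lt α hα _ (P.add_one_lt_mu_ord hξ))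

theorem a_lt_of_mem_I (hα : α ∈ Sset P.lam.ord P.mu) (hξ : ξ < P.mu.ord)
    (hγ : P.mu ≤ γ.cof) (hγI : γ ∈ P.I α ξ) : P.a α ξ < γ := by
  by_cases hlim : Order.IsSuccLimit ξ
  · refine (P.I_subset_Icc hγI).1.lt_of_ne fun heq => ?_
    exact (heq ▸ P.cof_a_lt_mu hα hξ hlim).not_ge hγ
  · rw [I, if_neg hlim] at hγI
    exact hγI.1

theorem exists_mem_I (hα : α ∈ Sset P.lam.ord P.mu) (hη : η < P.mu.ord) (hγη : P.a α η < γ)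
    (hγα : γ < α) : ∃ ξ, η ≤ ξ ∧ ξ < P.mu.ord ∧ γ ∈ P.I α ξ := by
  set T := {ξ | ξ < P.mu.ord ∧ γ ≤ P.a α ξ}
  have hT : T.Nonempty :=
    let ⟨ξ, hξ, hγξ⟩ := P.a_unbounded α hα γ hγα
    ⟨ξ, hξ, hγξ⟩
  obtain ⟨hξ₀, hγξ₀⟩ : sInf T ∈ T := csInf_mem hT
  set ξ₀ := sInf T
  have below : ∀ ζ < ξ₀, P.a α ζ < γ := fun ζ hζ =>
    lt_of_not_ge fun hγζ => (csInf_le' (show ζ ∈ T from ⟨hζ.trans hξ₀, hγζ⟩)).not_gt hζ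
  have hηξ₀ : η < ξ₀ := lt_of_not_ge fun h => (hγξ₀.trans (P.a_le_a hα hη h)).not_gt hγη
  rcases Ordinal.zero_or_succ_or_isSuccLimit ξ₀ with h0 | ⟨ζ, hζ⟩ | hlim
  · exact ((hηξ₀.trans_eq h0).not_ge zero_le).elim
  · rw [← hζ, Order.lt_succ_iff] at hηξ₀
    refine ⟨ζ, hηξ₀, (Order.lt_succ ζ).trans (hζ ▸ hξ₀), P.Ioc_subset_I ⟨below ζ ?_, ?_⟩⟩
    · exact hζ ▸ Order.lt_succ ζ
    · rwa [← Order.succ_eq_add_one, hζ]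
  · have hγ : γ = P.a α ξ₀ := le_antisymm hγξ₀ <| (P.a_closed α hα ξ₀ hξ₀ hlim).2 <| by
      rintro _ ⟨ζ, hζ, rfl⟩
      exact (below ζ hζ).le
    refine ⟨ξ₀, hηξ₀.le, hξ₀, ?_⟩
    rw [I, if_pos hlim, hγ]
    exact ⟨le_rfl, P.a_le_a hα (P.add_one_lt_mu_ord hξ₀) le_self_add⟩

theorem mem_U1_iff {p : Ordinal × Ordinal} :
    p ∈ P.U1 α φ η ↔ p = (α, φ) ∨ ∃ ξ ∈ P.M φ, η ≤ ξ ∧ p ∈ P.Xset ∧ p.1 ∈ P.I α ξ := by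
  simp only [U1, col, mem_union, mem_singleton_iff, mem_iUnion, mem_ofPred_eq, exists_prop]
  constructor
  · rintro (h | ⟨γ, ⟨ξ, ⟨hM, hη⟩, hγ⟩, hX, rfl⟩)
    exacts [Or.inl h, Or.inr ⟨ξ, hM, hη, hX, hγ⟩]
  · rintro (h | ⟨ξ, hM, hη, hX, hI⟩)
    exacts [Or.inl h, Or.inr ⟨p.1, ⟨ξ, ⟨hM, hη⟩, hI⟩, hX, rfl⟩]

theorem mem_U3_iff {p : Ordinal × Ordinal} :
    p ∈ P.U3 α β ↔ p ∈ P.Xset ∧ β < p.1 ∧ p.1 ≤ α := by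
  simp only [U3, col, mem_iUnion, mem_ofPred_eq, mem_Ioc, exists_prop]
  constructor
  · rintro ⟨γ, hγ, hX, rfl⟩
    exact ⟨hX, hγ⟩
  · rintro ⟨hX, hγ⟩
    exact ⟨p.1, hγ, hX, rfl⟩

theorem U1_anti {η η' : Ordinal} (h : η ≤ η') : P.U1 α φ η' ⊆ P.U1 α φ η :=
  union_subset_union_right _ <| biUnion_subset_biUnion_left <|
    biUnion_subset_biUnion_left fun _ hξ => ⟨hξ.1, h.trans hξ.2⟩

theorem U3_subset_U3 {β' : Ordinal} (hβ : β ≤ β') (hα : α ≤ α') : P.U3 α β' ⊆ P.U3 α' β :=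
  biUnion_subset_biUnion_left (Ioc_subset_Ioc hβ hα)

theorem U3_subset_U1 (hξM : ξ ∈ P.M φ) (hηξ : η ≤ ξ) (hγ : γ ∈ P.I α ξ) :
    P.U3 γ (P.a α ξ) ⊆ P.U1 α φ η := fun _ hp =>
  let ⟨hpX, hp₁, hp₂⟩ := P.mem_U3_iff.1 hp
  P.mem_U1_iff.2 <| Or.inr
    ⟨ξ, hξM, hηξ, hpX, P.Ioc_subset_I ⟨hp₁, hp₂.trans (P.I_subset_Icc hγ).2⟩⟩

theorem exists_U1_subset_U3 (hα : α ∈ Sset P.lam.ord P.mu) (hφ : φ < P.kappa.ord)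
    (hβ : β < α) : ∃ η < P.mu.ord, P.U1 α φ η ⊆ P.U3 α β := by
  obtain ⟨η, hη, hβη⟩ := P.a_unbounded α hα β hβ
  refine ⟨η + 1, P.add_one_lt_mu_ord hη, fun p hp => P.mem_U3_iff.2 ?_⟩
  rcases P.mem_U1_iff.1 hp with rfl | ⟨ξ, hξM, hηξ, hpX, hpI⟩
  · exact ⟨⟨hα.1, Or.inl ⟨hα, hφ⟩⟩, hβ, le_rfl⟩
  · have hξ := P.M_sub φ hφ hξM
    refine ⟨hpX, ?_, (P.lt_of_mem_I hα hξ hpI).le⟩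
    calc β ≤ P.a α η := hβη
      _ < P.a α (η + 1) := P.a_lt_a_add_one hα hη
      _ ≤ P.a α ξ := P.a_le_a hα hξ hηξ
      _ ≤ p.1 := (P.I_subset_Icc hpI).1

theorem eq_U1_or_exists_U3_subset_of_mem_basics {B : Set (Ordinal × Ordinal)}
    (hcof : P.mu ≤ α.cof) (hB : B ∈ P.basics) (hx : (α, φ) ∈ B) :
    (α ∈ Sset P.lam.ord P.mu ∧ ∃ η < P.mu.ord, B = P.U1 α φ η) ∨ ∃ β < α, P.U3 α β ⊆ B := by
  rcases hB with ⟨α₁, hα₁, φ₁, hφ₁, η₁, hη₁, rfl⟩ | ⟨α₂, -, hcof₂, rfl⟩ |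
    ⟨α₃, -, -, β₃, -, rfl⟩
  · rcases P.mem_U1_iff.1 hx with heq | ⟨ξ, hξM, hηξ, -, hαI⟩
    · obtain ⟨rfl, rfl⟩ := Prod.ext_iff.1 heq
      exact Or.inl ⟨hα₁, η₁, hη₁, rfl⟩
    · exact Or.inr ⟨P.a α₁ ξ, P.a_lt_of_mem_I hα₁ (P.M_sub φ₁ hφ₁ hξM) hcof hαI,
        P.U3_subset_U1 hξM hηξ hαI⟩
  · cases hx
    exact absurd hcof hcof₂.not_ge
  · obtain ⟨-, hβα, hαα₃⟩ := P.mem_U3_iff.1 hx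
    exact Or.inr ⟨β₃, hβα, P.U3_subset_U3 le_rfl hαα₃⟩

theorem hasBasis_nhds_U1 (hα : α ∈ Sset P.lam.ord P.mu) (hφ : φ < P.kappa.ord) :
    (𝓝 (⟨(α, φ), hα.1, Or.inl ⟨hα, hφ⟩⟩ : P.Xset)).HasBasis (· < P.mu.ord)
      fun η => Subtype.val ⁻¹' P.U1 α φ η := by
  refine TopologicalSpace.hasBasis_nhds_generateFrom (S := Iio _)
    ⟨0, (Cardinal.isSuccLimit_ord P.mu_reg.aleph0_le).bot_lt⟩
    (fun i hi j hj => ⟨max i j, mem_Iio.2 (max_lt hi hj), preimage_mono (P.U1_anti (le_max_left i j)),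
      preimage_mono (P.U1_anti (le_max_right i j))⟩)
    (fun η hη => ⟨⟨_, Or.inl ⟨α, hα, φ, hφ, η, hη, rfl⟩, rfl⟩, Or.inl rfl⟩) ?_
  rintro _ ⟨B, hB, rfl⟩ hxB
  rcases P.eq_U1_or_exists_U3_subset_of_mem_basics hα.2.ge hB hxB with
    ⟨-, η, hη, rfl⟩ | ⟨β, hβ, hβB⟩
  · exact ⟨η, hη, subset_rfl⟩
  · obtain ⟨η, hη, hηβ⟩ := P.exists_U1_subset_U3 hα hφ hβ
    exact ⟨η, hη, preimage_mono (hηβ.trans hβB)⟩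

theorem hasBasis_nhds_U3 (hcof : P.mu < α.cof) (hx : (α, 0) ∈ P.Xset) :
    (𝓝 (⟨(α, 0), hx⟩ : P.Xset)).HasBasis (· < α) fun β => Subtype.val ⁻¹' P.U3 α β := by
  refine TopologicalSpace.hasBasis_nhds_generateFrom (S := Iio _)
    ⟨0, Ordinal.cof_pos.1 (zero_le.trans_lt hcof)⟩
    (fun i hi j hj => ⟨max i j, mem_Iio.2 (max_lt hi hj),
      preimage_mono (P.U3_subset_U3 (le_max_left i j) le_rfl),
      preimage_mono (P.U3_subset_U3 (le_max_right i j) le_rfl)⟩)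
    (fun β hβ => ⟨⟨_, Or.inr (Or.inr ⟨α, hx.1, hcof, β, hβ, rfl⟩), rfl⟩,
      P.mem_U3_iff.2 ⟨hx, hβ, le_rfl⟩⟩) ?_
  rintro _ ⟨B, hB, rfl⟩ hxB
  rcases P.eq_U1_or_exists_U3_subset_of_mem_basics hcof.le hB hxB with
    ⟨hαS, -⟩ | ⟨β, hβ, hβB⟩
  · exact absurd hαS.2 hcof.ne'
  · exact ⟨β, hβ, preimage_mono hβB⟩

variable {F : Set P.Xset}

theorem exists_accPt_of_mem_Sset (hα : α ∈ Sset P.lam.ord P.mu)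
    (hacc : ∀ β < α, ∃ γ ∈ P.pi F, β < γ ∧ γ < α) :
    ∃ φ, ∃ hφ : φ < P.kappa.ord, AccPt (⟨(α, φ), hα.1, Or.inl ⟨hα, hφ⟩⟩ : P.Xset) (𝓟 F) := by
  set N := {ξ | ξ < P.mu.ord ∧ ∃ γ ∈ P.pi F, γ ∈ P.I α ξ}
  have hNμ : N ⊆ Iio P.mu.ord := fun ξ hξ => hξ.1
  have hN : ∀ η < P.mu.ord, ∃ ξ ∈ N, η ≤ ξ := fun η hη => by
    obtain ⟨γ, hγF, hηγ, hγα⟩ := hacc (P.a α η) (P.a_lt α hα η hη)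
    obtain ⟨ξ, hηξ, hξ, hγξ⟩ := P.exists_mem_I hα hη hηγ hγα
    exact ⟨ξ, ⟨hξ, γ, hγF, hγξ⟩, hηξ⟩
  obtain ⟨φ, hφ, hNφ⟩ := P.M_mad N hNμ ((P.mu_reg.mk_eq_iff_forall_exists_le hNμ).2 hN)
  have hNφ' := (P.mu_reg.mk_eq_iff_forall_exists_le (inter_subset_left.trans hNμ)).1 hNφ
  refine ⟨φ, hφ, accPt_iff_nhds.2 fun V hV => ?_⟩
  obtain ⟨η, hη, hηV⟩ := (P.hasBasis_nhds_U1 hα hφ).mem_iff.1 hV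
  obtain ⟨ξ, ⟨⟨hξ, _, ⟨y, hyF, rfl⟩, hyI⟩, hξM⟩, hηξ⟩ := hNφ' η hη
  refine ⟨y, ⟨hηV (P.mem_U1_iff.2 (Or.inr ⟨ξ, hξM, hηξ, y.2, hyI⟩)), hyF⟩, fun hyx => ?_⟩
  exact (P.lt_of_mem_I hα hξ hyI).ne (congrArg (fun z : P.Xset => z.1.1) hyx)

theorem accPt_of_mu_lt_cof (hcof : P.mu < α.cof) (hx : (α, 0) ∈ P.Xset)
    (hacc : ∀ β < α, ∃ γ ∈ P.pi F, β < γ ∧ γ < α) : AccPt (⟨(α, 0), hx⟩ : P.Xset) (𝓟 F) := by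
  refine accPt_iff_nhds.2 fun V hV => ?_
  obtain ⟨β, hβ, hβV⟩ := (P.hasBasis_nhds_U3 hcof hx).mem_iff.1 hV
  obtain ⟨_, ⟨y, hyF, rfl⟩, hβy, hyα⟩ := hacc β hβ
  refine ⟨y, ⟨hβV (P.mem_U3_iff.2 ⟨y.2, hβy, hyα.le⟩), hyF⟩, fun hyx => ?_⟩
  exact hyα.ne (congrArg (fun z : P.Xset => z.1.1) hyx)

end DSoukupPaper.Setup

namespace DSoukupPaper

/-- If `π(F)` accumulates to `α` of cofinality `η` with `μ ≤ η < λ`, then the derived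
set of `F` meets the column `X_α`. -/
theorem stmt10 (P : Setup) (F : Set ↥P.Xset) (α : Ordinal) (hα : α < P.lam.ord)
    (hcof : P.mu ≤ α.cof)
    (hacc : ∀ β < α, ∃ γ ∈ P.pi F, β < γ ∧ γ < α) :
    ∃ x : ↥P.Xset, (x : Ordinal × Ordinal).1 = α ∧
      ∀ V : Set ↥P.Xset, IsOpen V → x ∈ V → ∃ y ∈ F, y ∈ V ∧ y ≠ x := by
  suffices ∃ x : P.Xset, (x : Ordinal × Ordinal).1 = α ∧ AccPt x (𝓟 F) by
    obtain ⟨x, hxα, hx⟩ := this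
    refine ⟨x, hxα, fun V hV hxV => ?_⟩
    obtain ⟨y, ⟨hyV, hyF⟩, hyx⟩ := accPt_iff_nhds.1 hx V (hV.mem_nhds hxV)
    exact ⟨y, hyF, hyV, hyx⟩
  rcases hcof.eq_or_lt with hcof | hcof
  · obtain ⟨φ, hφ, hacc⟩ := P.exists_accPt_of_mem_Sset ⟨hα, hcof.symm⟩ hacc
    exact ⟨_, rfl, hacc⟩
  · have hx : (α, 0) ∈ P.Xset := ⟨hα, Or.inr ⟨fun hαS => hcof.ne' hαS.2, rfl⟩⟩
    exact ⟨_, rfl, P.accPt_of_mu_lt_cof hcof hx hacc⟩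

end DSoukupPaper
end
end
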